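/- arXiv:2105.03874 — 4 statements merged into one kernel-verified Lean document; each statement's English description precedes it below -/
import Mathlib

section
/- If each Pⱼ is an n×n column-stochastic matrix, G is a nonnegative n×n matrix, α ∈ (0,1), and T̃ is a non-expansive (in l₁) column-wise thresholding operator mapping nonnegative matrices to nonnegative matrices, then the map H(A) := T̃(G(A)), where G(A)(:,j) = α Pⱼ A(j,:)ᵀ + (1−α) G(:,j), is a contraction on ℝ₊^{n×n} with contraction constant at most α in the ‖·‖_{l₁} norm; hence the iteration X^{(q+1)} = H(X^{(q)}) converges to a unique fixed point from any nonnegative initial matrix X^{(0)}. -/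
/-!
A column-stochastic matrix does not increase the `ℓ¹` norm of a vector, and the constant part
`(1 - α) G` cancels in differences, so `A ↦ G(A)` is an `α`-contraction for the entrywise `ℓ¹`
distance; the non-expansive `T̃` keeps the constant `α`. Nonnegative matrices form a closed,
hence complete, subset for this distance and `H` maps it to itself, so Banach's fixed point
theorem gives the unique nonnegative fixed point and the convergence of the iteration.
-/

open Filter Finset Topology

namespace Matrix

variable {m n : Type*} [Fintype m]

theorem sum_abs_mulVec_le_of_mem_colStochastic [DecidableEq m] {M : Matrix m m ℝ}
    (hM : M ∈ colStochastic ℝ m) (x : m → ℝ) : ∑ i, |(M *ᵥ x) i| ≤ ∑ i, |x i| :=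
  calc ∑ i, |(M *ᵥ x) i|
      ≤ ∑ i, (M *ᵥ fun k => |x k|) i := by
        refine sum_le_sum fun i _ => (abs_sum_le_sum_abs _ _).trans_eq ?_
        simp only [mulVec, dotProduct, abs_mul, abs_of_nonneg (hM.1 _ _)]
    _ = ∑ i, |x i| := sum_mulVec_of_mem_colStochastic hM

/-- The paper's `G(A)`: column `j` is `α Pⱼ A(j,:)ᵀ + (1 - α) G(:,j)`. -/
def stochasticUpdate (α : ℝ) (P : n → Matrix m m ℝ) (G : Matrix m n ℝ) (A : Matrix n m ℝ) :
    Matrix m n ℝ :=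
  of fun i j => α * (P j *ᵥ A j) i + (1 - α) * G i j

variable [DecidableEq m] {α : ℝ} {P : n → Matrix m m ℝ} {G : Matrix m n ℝ}

theorem stochasticUpdate_nonneg (hα0 : 0 ≤ α) (hα1 : α ≤ 1) (hP : ∀ j, P j ∈ colStochastic ℝ m)
    (hG : ∀ i j, 0 ≤ G i j) {A : Matrix n m ℝ} (hA : ∀ i j, 0 ≤ A i j) (i : m) (j : n) :
    0 ≤ stochasticUpdate α P G A i j :=
  add_nonneg (mul_nonneg hα0 (nonneg_mulVec_of_mem_colStochastic (hP j) (hA j) i))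
    (mul_nonneg (sub_nonneg.2 hα1) (hG i j))

theorem sum_abs_stochasticUpdate_sub_le [Fintype n] (hα0 : 0 ≤ α)
    (hP : ∀ j, P j ∈ colStochastic ℝ m) (A B : Matrix n m ℝ) :
    ∑ i, ∑ j, |stochasticUpdate α P G A i j - stochasticUpdate α P G B i j| ≤
      α * ∑ j, ∑ k, |A j k - B j k| := by
  have hsub (i : m) (j : n) : stochasticUpdate α P G A i j - stochasticUpdate α P G B i j =
      α * (P j *ᵥ (A j - B j)) i := by
    simp only [stochasticUpdate, of_apply, mulVec_sub, Pi.sub_apply]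
    ring
  calc ∑ i, ∑ j, |stochasticUpdate α P G A i j - stochasticUpdate α P G B i j|
      = α * ∑ j, ∑ i, |(P j *ᵥ (A j - B j)) i| := by
        simp only [hsub, abs_mul, abs_of_nonneg hα0, ← mul_sum]
        rw [sum_comm]
    _ ≤ α * ∑ j, ∑ k, |A j k - B j k| :=
        mul_le_mul_of_nonneg_left
          (sum_le_sum fun j _ => sum_abs_mulVec_le_of_mem_colStochastic (hP j) _) hα0

end Matrix

variable {m n : Type*}

/-- `Matrix m n ℝ` carries the sup distance; Banach's theorem is applied in this copy of it,
whose distance is the entrywise `ℓ¹` one. -/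
abbrev EntrywiseL1 (m n : Type*) : Type _ := PiLp 1 fun _ : m => PiLp 1 fun _ : n => ℝ

namespace EntrywiseL1

def ofMatrix (A : Matrix m n ℝ) : EntrywiseL1 m n := WithLp.toLp 1 fun i => WithLp.toLp 1 (A i)

def toMatrix (x : EntrywiseL1 m n) : Matrix m n ℝ := fun i j => x i j

theorem dist_eq [Fintype m] [Fintype n] (x y : EntrywiseL1 m n) :
    dist x y = ∑ i, ∑ j, |toMatrix x i j - toMatrix y i j| := by
  simp only [PiLp.dist_eq_of_L1, Real.dist_eq, toMatrix]

theorem isClosed_setOf_nonneg : IsClosed {x : EntrywiseL1 m n | ∀ i j, 0 ≤ toMatrix x i j} := by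
  simp only [Set.ofPred_forall]
  exact isClosed_iInter fun i => isClosed_iInter fun j => isClosed_le continuous_const
    ((continuous_apply j).comp ((PiLp.continuous_ofLp _ _).comp
      ((continuous_apply i).comp (PiLp.continuous_ofLp _ _))))

end EntrywiseL1

open EntrywiseL1 in
theorem Matrix.existsUnique_fixedPoint_and_tendsto_of_sum_abs_contraction [Fintype m] [Fintype n]
    {α : ℝ} (hα0 : 0 ≤ α) (hα1 : α < 1)
    {H : Matrix m n ℝ → Matrix m n ℝ} (hpos : ∀ A, (∀ i j, 0 ≤ A i j) → ∀ i j, 0 ≤ H A i j)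
    (hH : ∀ A B : Matrix m n ℝ, (∀ i j, 0 ≤ A i j) → (∀ i j, 0 ≤ B i j) →
      ∑ i, ∑ j, |H A i j - H B i j| ≤ α * ∑ i, ∑ j, |A i j - B i j|) :
    (∃! X : Matrix m n ℝ, (∀ i j, 0 ≤ X i j) ∧ H X = X) ∧
    ∀ X₀ : Matrix m n ℝ, (∀ i j, 0 ≤ X₀ i j) →
      ∀ X : Matrix m n ℝ, (∀ i j, 0 ≤ X i j) → H X = X →
        Tendsto (fun q => ∑ i, ∑ j, |(H^[q] X₀) i j - X i j|) atTop (𝓝 0) := by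
  let S : Set (EntrywiseL1 m n) := {x | ∀ i j, 0 ≤ toMatrix x i j}
  have : CompleteSpace S := isClosed_setOf_nonneg.completeSpace_coe
  let f : S → S := fun x => ⟨ofMatrix (H (toMatrix x)), hpos _ x.2⟩
  have hf : ContractingWith ⟨α, hα0⟩ f := ⟨hα1, LipschitzWith.of_dist_le_mul fun x y => by
    rw [Subtype.dist_eq, Subtype.dist_eq, dist_eq, dist_eq]
    exact hH _ _ x.2 y.2⟩
  have : Nonempty S := ⟨⟨0, fun _ _ => le_rfl⟩⟩
  let xfix : S := ContractingWith.fixedPoint (α := S) f hf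
  have hfix {X : Matrix m n ℝ} (hX : ∀ i j, 0 ≤ X i j) (hHX : H X = X) :
      (⟨ofMatrix X, hX⟩ : S) = xfix :=
    hf.fixedPoint_unique (Subtype.ext (congrArg ofMatrix hHX))
  refine ⟨⟨toMatrix xfix, ⟨xfix.2, congrArg (toMatrix ∘ Subtype.val) hf.fixedPoint_isFixedPt⟩,
    fun Y ⟨hY, hHY⟩ => congrArg (toMatrix ∘ Subtype.val) (hfix hY hHY)⟩, ?_⟩
  intro X₀ hX₀ X hX hHX
  have hiter (q : ℕ) : toMatrix (f^[q] ⟨ofMatrix X₀, hX₀⟩).1 = H^[q] X₀ := by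
    induction q with
    | zero => rfl
    | succ q ih => rw [Function.iterate_succ_apply', Function.iterate_succ_apply', ← ih]; rfl
  have hlim : Tendsto (fun q => f^[q] ⟨ofMatrix X₀, hX₀⟩) atTop (𝓝 ⟨ofMatrix X, hX⟩) :=
    hfix hX hHX ▸ hf.tendsto_iterate_fixedPoint _
  refine (tendsto_iff_dist_tendsto_zero.1 hlim).congr fun q => ?_
  rw [Subtype.dist_eq, dist_eq, hiter]
  rfl

/-- With column-stochastic `Pⱼ`, nonnegative `G`, `α ∈ (0,1)`, and a
non-expansive column-wise thresholding operator `T̃` preserving nonnegativity, the map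
`H(A) = T̃(G(A))` with `G(A)(:,j) = α Pⱼ A(j,:)ᵀ + (1−α) G(:,j)` is an α-contraction in the
entrywise l₁ norm on nonnegative matrices; hence the iteration converges to a unique
nonnegative fixed point from any nonnegative initial matrix. -/
theorem stmt1 {n : ℕ} (α : ℝ) (hα : α ∈ Set.Ioo (0 : ℝ) 1)
    (P : Fin n → Matrix (Fin n) (Fin n) ℝ)
    (hP : ∀ j, (∀ i k, 0 ≤ P j i k) ∧ ∀ k, ∑ i, P j i k = 1)
    (G : Matrix (Fin n) (Fin n) ℝ) (hG : ∀ i j, 0 ≤ G i j)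
    (Tt : Matrix (Fin n) (Fin n) ℝ → Matrix (Fin n) (Fin n) ℝ)
    (hTtpos : ∀ A, (∀ i j, 0 ≤ A i j) → ∀ i j, 0 ≤ Tt A i j)
    (hTt : ∀ A B : Matrix (Fin n) (Fin n) ℝ, (∀ i j, 0 ≤ A i j) → (∀ i j, 0 ≤ B i j) →
      ∑ i, ∑ j, |Tt A i j - Tt B i j| ≤ ∑ i, ∑ j, |A i j - B i j|)
    (H : Matrix (Fin n) (Fin n) ℝ → Matrix (Fin n) (Fin n) ℝ)
    (hH : ∀ A, H A =
      Tt (Matrix.of fun i' j' =>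
        α * ((P j').mulVec (fun k => A j' k)) i' + (1 - α) * G i' j')) :
    (∀ A B : Matrix (Fin n) (Fin n) ℝ, (∀ i j, 0 ≤ A i j) → (∀ i j, 0 ≤ B i j) →
      ∑ i, ∑ j, |H A i j - H B i j| ≤ α * ∑ i, ∑ j, |A i j - B i j|) ∧
    (∃! X : Matrix (Fin n) (Fin n) ℝ, (∀ i j, 0 ≤ X i j) ∧ H X = X) ∧
    (∀ X₀ : Matrix (Fin n) (Fin n) ℝ, (∀ i j, 0 ≤ X₀ i j) →
      ∀ X : Matrix (Fin n) (Fin n) ℝ, (∀ i j, 0 ≤ X i j) → H X = X →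
        Tendsto (fun q => ∑ i, ∑ j, |(H^[q] X₀) i j - X i j|) atTop (nhds 0)) := by
  obtain ⟨hα0, hα1⟩ := hα
  have hPcol (j : Fin n) : P j ∈ Matrix.colStochastic ℝ (Fin n) :=
    Matrix.mem_colStochastic_iff_sum.2 (hP j)
  have hHcomp : ∀ A, H A = Tt (Matrix.stochasticUpdate α P G A) := hH
  have hUpos {A : Matrix (Fin n) (Fin n) ℝ} (hA : ∀ i j, 0 ≤ A i j) :=
    Matrix.stochasticUpdate_nonneg hα0.le hα1.le hPcol hG hA
  have hcontr : ∀ A B : Matrix (Fin n) (Fin n) ℝ, (∀ i j, 0 ≤ A i j) → (∀ i j, 0 ≤ B i j) →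
      ∑ i, ∑ j, |H A i j - H B i j| ≤ α * ∑ i, ∑ j, |A i j - B i j| := fun A B hA hB => by
    rw [hHcomp, hHcomp]
    exact (hTt _ _ (hUpos hA) (hUpos hB)).trans
      (Matrix.sum_abs_stochasticUpdate_sub_le hα0.le hPcol A B)
  have hHpos (A : Matrix (Fin n) (Fin n) ℝ) (hA : ∀ i j, 0 ≤ A i j) : ∀ i j, 0 ≤ H A i j := by
    rw [hHcomp]
    exact hTtpos _ (hUpos hA)
  exact ⟨hcontr,
    Matrix.existsUnique_fixedPoint_and_tendsto_of_sum_abs_contraction hα0.le hα1 hHpos hcontr⟩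
end

section
/- Consider the partial-updating iteration where at each step q a subset Ω^{(q)} ⊆ {1,…,n} of column indices is selected with Ω^{(q+1)} ⊆ Ω^{(q)}, and X^{(q+1)}(:,j) = T(α Pⱼ X^{(q)}(j,:)ᵀ + (1−α) G(:,j)) for j ∈ Ω^{(q)}, while X^{(q+1)}(:,j) = X^{(q)}(:,j) for j ∉ Ω^{(q)}. If each Pⱼ is column-stochastic, T is non-expansive in the 1-norm on ℝ₊ⁿ, and α ∈ (0,1), then ‖X^{(q+2)} − X^{(q+1)}‖_{l₁} ≤ α ‖X^{(q+1)} − X^{(q)}‖_{l₁} for all q ≥ 0, and hence the sequence X^{(q)} converges. -/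
/-!
If a column is recomputed at step `q + 1`, nestedness of the index sets says it was also
recomputed at step `q`, so its change is `T` applied to two damped inputs. Since `T` is
`ℓ₁`-nonexpansive and a column-stochastic `P_j` does not increase the `ℓ₁` norm, that change is
at most `α` times the `ℓ₁` change of the `j`-th row at the previous step; columns that are kept
do not change. Summing over `j` gives the contraction, so the entrywise `ℓ₁` steps decay
geometrically and the iterates form a Cauchy sequence.
-/

open Finset Filter Topology Matrix

section PartialUpdate

variable {ι : Type*} [Fintype ι] [DecidableEq ι]

theorem Matrix.sum_abs_mulVec_le_of_mem_colStochastic_s3 {M : Matrix ι ι ℝ}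
    (hM : M ∈ colStochastic ℝ ι) (x : ι → ℝ) : ∑ i, |(M *ᵥ x) i| ≤ ∑ i, |x i| := by
  have hentry : ∀ i, |(M *ᵥ x) i| ≤ (M *ᵥ fun k => |x k|) i := fun i => by
    calc |(M *ᵥ x) i| ≤ ∑ k, |M i k * x k| := abs_sum_le_sum_abs _ _
      _ = (M *ᵥ fun k => |x k|) i := by
        simp only [abs_mul, abs_of_nonneg (nonneg_of_mem_colStochastic hM), mulVec, dotProduct]
  calc ∑ i, |(M *ᵥ x) i| ≤ ∑ i, (M *ᵥ fun k => |x k|) i := sum_le_sum fun i _ => hentry i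
    _ = ∑ i, |x i| := sum_mulVec_of_mem_colStochastic hM

def dampedStep (α : ℝ) (M : Matrix ι ι ℝ) (g x : ι → ℝ) : ι → ℝ :=
  fun i => α * (M *ᵥ x) i + (1 - α) * g i

theorem dampedStep_nonneg {α : ℝ} (hα0 : 0 ≤ α) (hα1 : α ≤ 1) {M : Matrix ι ι ℝ}
    (hM : M ∈ colStochastic ℝ ι) {g x : ι → ℝ} (hg : ∀ i, 0 ≤ g i) (hx : ∀ i, 0 ≤ x i)
    (i : ι) : 0 ≤ dampedStep α M g x i :=
  add_nonneg (mul_nonneg hα0 (nonneg_mulVec_of_mem_colStochastic hM hx i))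
    (mul_nonneg (sub_nonneg.2 hα1) (hg i))

theorem sum_abs_dampedStep_sub_le {α : ℝ} (hα0 : 0 ≤ α) {M : Matrix ι ι ℝ}
    (hM : M ∈ colStochastic ℝ ι) (g x y : ι → ℝ) :
    ∑ i, |dampedStep α M g x i - dampedStep α M g y i| ≤ α * ∑ i, |x i - y i| := by
  have hdiff : ∀ i, dampedStep α M g x i - dampedStep α M g y i = α * (M *ᵥ (x - y)) i := by
    intro i
    simp only [dampedStep, mulVec_sub, Pi.sub_apply]
    ring
  simp only [hdiff, abs_mul, abs_of_nonneg hα0, ← mul_sum]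
  exact mul_le_mul_of_nonneg_left (sum_abs_mulVec_le_of_mem_colStochastic_s3 hM _) hα0

/-- Column `j` is recomputed from the row `Y j` (the paper's `X(j,:)ᵀ`). -/
def partialUpdate (α : ℝ) (P : ι → Matrix ι ι ℝ) (G : Matrix ι ι ℝ)
    (T : (ι → ℝ) → ι → ℝ) (S : Finset ι) (Y : Matrix ι ι ℝ) : Matrix ι ι ℝ :=
  fun i j => if j ∈ S then T (dampedStep α (P j) (fun i => G i j) (Y j)) i else Y i j

variable {α : ℝ} {P : ι → Matrix ι ι ℝ} {G : Matrix ι ι ℝ} {T : (ι → ℝ) → ι → ℝ}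

theorem partialUpdate_nonneg (hα0 : 0 ≤ α) (hα1 : α ≤ 1) (hP : ∀ j, P j ∈ colStochastic ℝ ι)
    (hG : ∀ i j, 0 ≤ G i j) (hTpos : ∀ a : ι → ℝ, (∀ i, 0 ≤ a i) → ∀ i, 0 ≤ T a i)
    (S : Finset ι) {Y : Matrix ι ι ℝ} (hY : ∀ i j, 0 ≤ Y i j) (i j : ι) :
    0 ≤ partialUpdate α P G T S Y i j := by
  unfold partialUpdate
  split_ifs
  · exact hTpos _ (dampedStep_nonneg hα0 hα1 (hP j) (fun i => hG i j) (hY j)) i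
  · exact hY i j

theorem sum_abs_partialUpdate_col_sub_le (hα0 : 0 ≤ α) (hα1 : α ≤ 1)
    (hP : ∀ j, P j ∈ colStochastic ℝ ι) (hG : ∀ i j, 0 ≤ G i j)
    (hTpos : ∀ a : ι → ℝ, (∀ i, 0 ≤ a i) → ∀ i, 0 ≤ T a i)
    (hT : ∀ a b : ι → ℝ, (∀ i, 0 ≤ a i) → (∀ i, 0 ≤ b i) →
      ∑ i, |T a i - T b i| ≤ ∑ i, |a i - b i|)
    {S S' : Finset ι} (hS : S' ⊆ S) {Y : Matrix ι ι ℝ} (hY : ∀ i j, 0 ≤ Y i j) (j : ι) :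
    ∑ i, |partialUpdate α P G T S' (partialUpdate α P G T S Y) i j -
        partialUpdate α P G T S Y i j| ≤
      α * ∑ k, |partialUpdate α P G T S Y j k - Y j k| := by
  set Y' := partialUpdate α P G T S Y
  by_cases hj : j ∈ S'
  · have hY' := partialUpdate_nonneg hα0 hα1 hP hG hTpos S hY
    calc ∑ i, |partialUpdate α P G T S' Y' i j - Y' i j|
        = ∑ i, |T (dampedStep α (P j) (fun i => G i j) (Y' j)) i -
            T (dampedStep α (P j) (fun i => G i j) (Y j)) i| := by
          simp only [Y', partialUpdate, hj, hS hj, if_true]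
      _ ≤ ∑ i, |dampedStep α (P j) (fun i => G i j) (Y' j) i -
            dampedStep α (P j) (fun i => G i j) (Y j) i| :=
          hT _ _ (dampedStep_nonneg hα0 hα1 (hP j) (fun i => hG i j) (hY' j))
            (dampedStep_nonneg hα0 hα1 (hP j) (fun i => hG i j) (hY j))
      _ ≤ α * ∑ k, |Y' j k - Y j k| := sum_abs_dampedStep_sub_le hα0 (hP j) _ _ _
  · have hkeep : ∀ i, partialUpdate α P G T S' Y' i j = Y' i j := fun i => by
      simp only [partialUpdate, hj, if_false]
    simp only [hkeep, sub_self, abs_zero, sum_const_zero]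
    exact mul_nonneg hα0 (sum_nonneg fun k _ => abs_nonneg _)

theorem sum_abs_partialUpdate_sub_le (hα0 : 0 ≤ α) (hα1 : α ≤ 1)
    (hP : ∀ j, P j ∈ colStochastic ℝ ι) (hG : ∀ i j, 0 ≤ G i j)
    (hTpos : ∀ a : ι → ℝ, (∀ i, 0 ≤ a i) → ∀ i, 0 ≤ T a i)
    (hT : ∀ a b : ι → ℝ, (∀ i, 0 ≤ a i) → (∀ i, 0 ≤ b i) →
      ∑ i, |T a i - T b i| ≤ ∑ i, |a i - b i|)
    {S S' : Finset ι} (hS : S' ⊆ S) {Y : Matrix ι ι ℝ} (hY : ∀ i j, 0 ≤ Y i j) :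
    ∑ i, ∑ j, |partialUpdate α P G T S' (partialUpdate α P G T S Y) i j -
        partialUpdate α P G T S Y i j| ≤
      α * ∑ i, ∑ j, |partialUpdate α P G T S Y i j - Y i j| := by
  rw [sum_comm, mul_sum]
  exact sum_le_sum fun j _ =>
    sum_abs_partialUpdate_col_sub_le hα0 hα1 hP hG hTpos hT hS hY j

end PartialUpdate

theorem Matrix.exists_tendsto_of_sum_abs_sub_succ_le_mul {m n : Type*} [Fintype m] [Fintype n]
    {α : ℝ} (hα0 : 0 ≤ α) (hα1 : α < 1) {X : ℕ → Matrix m n ℝ}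
    (hX : ∀ q, ∑ i, ∑ j, |X (q + 2) i j - X (q + 1) i j| ≤
      α * ∑ i, ∑ j, |X (q + 1) i j - X q i j|) :
    ∃ L : Matrix m n ℝ, Tendsto X atTop (𝓝 L) := by
  set D : ℕ → ℝ := fun q => ∑ i, ∑ j, |X (q + 1) i j - X q i j|
  have hD : ∀ q, D q ≤ D 0 * α ^ q := fun q => by
    rw [mul_comm]
    exact le_geom hα0 q fun k _ => hX k
  have hentry : ∀ q i j, |X q i j - X (q + 1) i j| ≤ D q := fun q i j => by
    rw [abs_sub_comm]
    calc |X (q + 1) i j - X q i j| ≤ ∑ j', |X (q + 1) i j' - X q i j'| :=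
          single_le_sum (f := fun j' => |X (q + 1) i j' - X q i j'|)
            (fun _ _ => abs_nonneg _) (mem_univ j)
      _ ≤ D q := single_le_sum (f := fun i' => ∑ j', |X (q + 1) i' j' - X q i' j'|)
            (fun _ _ => sum_nonneg fun _ _ => abs_nonneg _) (mem_univ i)
  -- `Matrix m n ℝ` has no metric instance; work with the sup metric on `m → n → ℝ`.
  let Y : ℕ → m → n → ℝ := X
  have hcauchy : CauchySeq Y := by
    refine cauchySeq_of_le_geometric α (D 0) hα1 fun q => ?_
    have hbound : 0 ≤ D 0 * α ^ q :=
      (sum_nonneg fun _ _ => sum_nonneg fun _ _ => abs_nonneg _).trans (hD q)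
    refine (dist_pi_le_iff hbound).2 fun i => (dist_pi_le_iff hbound).2 fun j => ?_
    exact (Real.dist_eq _ _).trans_le ((hentry q i j).trans (hD q))
  exact cauchySeq_tendsto_of_complete hcauchy

theorem stmt3_general {n : ℕ} (α : ℝ) (hα : α ∈ Set.Ioo (0 : ℝ) 1)
    (P : Fin n → Matrix (Fin n) (Fin n) ℝ)
    (hP : ∀ j, (∀ i k, 0 ≤ P j i k) ∧ ∀ k, ∑ i, P j i k = 1)
    (G : Matrix (Fin n) (Fin n) ℝ) (hG : ∀ i j, 0 ≤ G i j)
    (T : (Fin n → ℝ) → (Fin n → ℝ))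
    (hTpos : ∀ a : Fin n → ℝ, (∀ i, 0 ≤ a i) → ∀ i, 0 ≤ T a i)
    (hT : ∀ a b : Fin n → ℝ, (∀ i, 0 ≤ a i) → (∀ i, 0 ≤ b i) →
      ∑ i, |T a i - T b i| ≤ ∑ i, |a i - b i|)
    (Ω : ℕ → Finset (Fin n))
    (hΩ : ∀ q, Ω (q + 1) ⊆ Ω q)
    (X : ℕ → Matrix (Fin n) (Fin n) ℝ) (hX0 : ∀ i j, 0 ≤ X 0 i j)
    (hupd : ∀ q, ∀ j ∈ Ω q, ∀ i, X (q + 1) i j =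
      T (fun i' => α * ((P j).mulVec (fun k => X q j k)) i' + (1 - α) * G i' j) i)
    (hkeep : ∀ q, ∀ j ∉ Ω q, ∀ i, X (q + 1) i j = X q i j) :
    (∀ q, ∑ i, ∑ j, |X (q + 2) i j - X (q + 1) i j| ≤
      α * ∑ i, ∑ j, |X (q + 1) i j - X q i j|) ∧
    ∃ L : Matrix (Fin n) (Fin n) ℝ, Filter.Tendsto X Filter.atTop (nhds L) := by
  obtain ⟨hα0, hα1⟩ := hα
  have hPcol : ∀ j, P j ∈ colStochastic ℝ (Fin n) := fun j => mem_colStochastic_iff_sum.2 (hP j)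
  have hstep : ∀ q, X (q + 1) = partialUpdate α P G T (Ω q) (X q) := fun q => by
    ext i j
    by_cases hj : j ∈ Ω q
    · simp only [partialUpdate, hj, if_true, hupd q j hj i]
      rfl
    · simp only [partialUpdate, hj, if_false, hkeep q j hj i]
  have hnonneg : ∀ q i j, 0 ≤ X q i j := fun q => by
    induction q with
    | zero => exact hX0
    | succ q ih =>
      rw [hstep q]
      exact partialUpdate_nonneg hα0.le hα1.le hPcol hG hTpos _ ih
  have hcontract : ∀ q, ∑ i, ∑ j, |X (q + 2) i j - X (q + 1) i j| ≤
      α * ∑ i, ∑ j, |X (q + 1) i j - X q i j| := fun q => by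
    rw [hstep (q + 1), hstep q]
    exact sum_abs_partialUpdate_sub_le hα0.le hα1.le hPcol hG hTpos hT (hΩ q) (hnonneg q)
  exact ⟨hcontract, exists_tendsto_of_sum_abs_sub_succ_le_mul hα0.le hα1 hcontract⟩

/-- Partial-updating iteration: columns in the nested index sets `Ω q` are
updated by the thresholded PageRank step, the others are kept. Then consecutive
differences contract with factor α, and the sequence converges. -/
theorem stmt3 {n : ℕ} (α : ℝ) (hα : α ∈ Set.Ioo (0 : ℝ) 1)
    (P : Fin n → Matrix (Fin n) (Fin n) ℝ)
    (hP : ∀ j, (∀ i k, 0 ≤ P j i k) ∧ ∀ k, ∑ i, P j i k = 1)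
    (G : Matrix (Fin n) (Fin n) ℝ) (hG : ∀ i j, 0 ≤ G i j)
    (T : (Fin n → ℝ) → (Fin n → ℝ))
    (hTpos : ∀ a : Fin n → ℝ, (∀ i, 0 ≤ a i) → ∀ i, 0 ≤ T a i)
    (hT : ∀ a b : Fin n → ℝ, (∀ i, 0 ≤ a i) → (∀ i, 0 ≤ b i) →
      ∑ i, |T a i - T b i| ≤ ∑ i, |a i - b i|)
    (Ω : ℕ → Finset (Fin n)) (hΩ0 : Ω 0 = Finset.univ)
    (hΩ : ∀ q, Ω (q + 1) ⊆ Ω q)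
    (X : ℕ → Matrix (Fin n) (Fin n) ℝ) (hX0 : ∀ i j, 0 ≤ X 0 i j)
    (hupd : ∀ q, ∀ j ∈ Ω q, ∀ i, X (q + 1) i j =
      T (fun i' => α * ((P j).mulVec (fun k => X q j k)) i' + (1 - α) * G i' j) i)
    (hkeep : ∀ q, ∀ j ∉ Ω q, ∀ i, X (q + 1) i j = X q i j) :
    (∀ q, ∑ i, ∑ j, |X (q + 2) i j - X (q + 1) i j| ≤
      α * ∑ i, ∑ j, |X (q + 1) i j - X q i j|) ∧
    ∃ L : Matrix (Fin n) (Fin n) ℝ, Filter.Tendsto X Filter.atTop (nhds L) :=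
  stmt3_general α hα P hP G hG T hTpos hT Ω hΩ X hX0 hupd hkeep
end

section
/- The optimization problem min over s ∈ ℝ₊ⁿ, μ ≥ 0 of (1/2)‖s + eμ − b‖₂² + β‖s‖₁, where b ∈ ℝ₊ⁿ, β > 0, and e is the all-ones vector, has a unique optimal solution (s*, μ*). -/
/-!
Relax the constraint `μ ≥ 0`. The KKT conditions of the relaxed problem say that
`s = (b - μ - β)⁺` coordinatewise, with multiplier `(b - μ - β)⁻` for `s ≥ 0`, and that the
residuals `s + μ - b` sum to zero; such a `μ ≥ 0` exists by the intermediate value theorem, because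
`b ≥ 0`. At a KKT point the objective splits exactly as its value plus the gap
`∑ (1/2) (t + ν - s - μ)² + (s + μ - b + β) t ≥ 0`. A second minimiser has zero gap, hence
`t = s + (μ - ν)` and `0 = ∑ (s + μ - b + β) t = (μ - ν) n β`, so it coincides with `(s, μ)`.
-/

open Finset

lemma posPart_mul_negPart_eq_zero {α : Type*} [Ring α] [LinearOrder α] [IsOrderedRing α]
    (x : α) : x⁺ * x⁻ = 0 := by
  rcases le_total x 0 with hx | hx
  · rw [posPart_eq_zero.mpr hx, zero_mul]
  · rw [negPart_eq_zero.mpr hx, mul_zero]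

section ThresholdSubproblem

variable {ι : Type*} [Fintype ι]

noncomputable def thresholdObjective (b : ι → ℝ) (β : ℝ) (s : ι → ℝ) (μ : ℝ) : ℝ :=
  (1 / 2) * ∑ i, (s i + μ - b i) ^ 2 + β * ∑ i, |s i|

/-- The KKT conditions of the problem with `μ` unconstrained; `s i + μ - b i + β` is the
multiplier of the constraint `0 ≤ s i`. -/
structure ThresholdKKT (b : ι → ℝ) (β : ℝ) (s : ι → ℝ) (μ : ℝ) : Prop where
  nonneg : ∀ i, 0 ≤ s i
  sum_residual : ∑ i, (s i + μ - b i) = 0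
  multiplier_nonneg : ∀ i, 0 ≤ s i + μ - b i + β
  complementary : ∀ i, (s i + μ - b i + β) * s i = 0

variable {b : ι → ℝ} {β : ℝ}

lemma thresholdObjective_of_nonneg {s : ι → ℝ} (hs : ∀ i, 0 ≤ s i) (μ : ℝ) :
    thresholdObjective b β s μ = ∑ i, ((1 / 2) * (s i + μ - b i) ^ 2 + β * s i) := by
  simp only [thresholdObjective, abs_of_nonneg (hs _), mul_sum, sum_add_distrib]

namespace ThresholdKKT

variable {s t : ι → ℝ} {μ ν : ℝ}

lemma objective_eq_add_gap (h : ThresholdKKT b β s μ) (ht : ∀ i, 0 ≤ t i) :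
    thresholdObjective b β t ν = thresholdObjective b β s μ +
      ∑ i, ((1 / 2) * (t i + ν - (s i + μ)) ^ 2 + (s i + μ - b i + β) * t i) := by
  have hterm : ∀ i, (1 / 2) * (t i + ν - b i) ^ 2 + β * t i =
      ((1 / 2) * (s i + μ - b i) ^ 2 + β * s i) +
        ((1 / 2) * (t i + ν - (s i + μ)) ^ 2 + (s i + μ - b i + β) * t i) +
        (ν - μ) * (s i + μ - b i) := fun i => by
    linear_combination -h.complementary i
  rw [thresholdObjective_of_nonneg ht, thresholdObjective_of_nonneg h.nonneg,
    sum_congr rfl fun i _ => hterm i, sum_add_distrib, sum_add_distrib, ← mul_sum,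
    h.sum_residual, mul_zero, add_zero]

lemma gap_term_nonneg (h : ThresholdKKT b β s μ) (ht : ∀ i, 0 ≤ t i) (i : ι) :
    0 ≤ (1 / 2) * (t i + ν - (s i + μ)) ^ 2 + (s i + μ - b i + β) * t i :=
  add_nonneg (by positivity) (mul_nonneg (h.multiplier_nonneg i) (ht i))

lemma objective_le (h : ThresholdKKT b β s μ) (ht : ∀ i, 0 ≤ t i) :
    thresholdObjective b β s μ ≤ thresholdObjective b β t ν := by
  rw [h.objective_eq_add_gap ht]
  exact le_add_of_nonneg_right (sum_nonneg fun i _ => h.gap_term_nonneg ht i)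

lemma eq_of_objective_le [Nonempty ι] (h : ThresholdKKT b β s μ) (hβ : β ≠ 0)
    (ht : ∀ i, 0 ≤ t i) (hle : thresholdObjective b β t ν ≤ thresholdObjective b β s μ) :
    t = s ∧ ν = μ := by
  have hgap : ∑ i, ((1 / 2) * (t i + ν - (s i + μ)) ^ 2 + (s i + μ - b i + β) * t i) = 0 := by
    rw [h.objective_eq_add_gap ht] at hle
    exact le_antisymm (by linarith) (sum_nonneg fun i _ => h.gap_term_nonneg ht i)
  have hterms := (sum_eq_zero_iff_of_nonneg fun i _ => h.gap_term_nonneg ht i).mp hgap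
  have hsplit : ∀ i, (1 / 2) * (t i + ν - (s i + μ)) ^ 2 = 0 ∧ (s i + μ - b i + β) * t i = 0 :=
    fun i => (add_eq_zero_iff_of_nonneg (by positivity)
      (mul_nonneg (h.multiplier_nonneg i) (ht i))).mp (hterms i (mem_univ i))
  have hshift : ∀ i, t i = s i + (μ - ν) := fun i => by
    have := pow_eq_zero_iff two_ne_zero |>.mp
      ((mul_eq_zero.mp (hsplit i).1).resolve_left (by norm_num))
    linarith
  have hμν : (μ - ν) * (Fintype.card ι * β) = 0 := calc
    (μ - ν) * (Fintype.card ι * β)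
        = ∑ i, (s i + μ - b i + β) * s i + (μ - ν) * ∑ i, ((s i + μ - b i) + β) := by
          simp only [h.complementary, sum_const_zero, sum_add_distrib, h.sum_residual,
            sum_const, card_univ, nsmul_eq_mul]
          ring
    _ = ∑ i, (s i + μ - b i + β) * t i := by
          rw [mul_sum, ← sum_add_distrib]
          exact sum_congr rfl fun i _ => by rw [hshift]; ring
    _ = 0 := sum_eq_zero fun i _ => (hsplit i).2
  have hνμ : ν = μ := by
    have : (Fintype.card ι : ℝ) * β ≠ 0 := mul_ne_zero (by positivity) hβ
    linarith [(mul_eq_zero.mp hμν).resolve_right this]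
  exact ⟨funext fun i => by rw [hshift, hνμ, sub_self, add_zero], hνμ⟩

end ThresholdKKT

lemma exists_nonneg_thresholdKKT (hb : ∀ i, 0 ≤ b i) (hβ : 0 ≤ β) :
    ∃ s μ, 0 ≤ μ ∧ ThresholdKKT b β s μ := by
  have hcont : Continuous fun μ : ℝ => ∑ i, ((b i - μ - β)⁺ + μ - b i) := by fun_prop
  have hlow : ∑ i, ((b i - 0 - β)⁺ + 0 - b i) ≤ 0 :=
    sum_nonpos fun i _ => by
      have : (b i - 0 - β)⁺ ≤ b i := sup_le (by linarith) (hb i)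
      linarith
  have hhigh : 0 ≤ ∑ i, ((b i - ∑ j, b j - β)⁺ + ∑ j, b j - b i) :=
    sum_nonneg fun i _ => by
      linarith [posPart_nonneg (b i - ∑ j, b j - β),
        single_le_sum (fun j _ => hb j) (mem_univ i)]
  obtain ⟨μ, ⟨hμ, -⟩, hroot⟩ := intermediate_value_Icc (sum_nonneg fun j _ => hb j)
    hcont.continuousOn ⟨hlow, hhigh⟩
  have hmult : ∀ i, (b i - μ - β)⁺ + μ - b i + β = (b i - μ - β)⁻ := fun i => by
    linarith [posPart_sub_negPart (b i - μ - β)]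
  refine ⟨fun i => (b i - μ - β)⁺, μ, hμ, fun i => posPart_nonneg _, hroot, fun i => ?_, fun i => ?_⟩
  · rw [hmult]; exact negPart_nonneg _
  · rw [hmult, mul_comm]; exact posPart_mul_negPart_eq_zero _

end ThresholdSubproblem

/-- The thresholding subproblem
`min_{s ≥ 0, μ ≥ 0} (1/2)‖s + eμ − b‖₂² + β‖s‖₁` with `b ≥ 0`, `β > 0`,
has a unique optimal solution `(s*, μ*)`. -/
theorem stmt8 {n : ℕ} (hn : 0 < n) (b : Fin n → ℝ) (hb : ∀ i, 0 ≤ b i)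
    (β : ℝ) (hβ : 0 < β) :
    ∃! p : (Fin n → ℝ) × ℝ,
      ((∀ i, 0 ≤ p.1 i) ∧ 0 ≤ p.2) ∧
      ∀ q : (Fin n → ℝ) × ℝ, (∀ i, 0 ≤ q.1 i) → 0 ≤ q.2 →
        (1 / 2) * ∑ i, (p.1 i + p.2 - b i) ^ 2 + β * ∑ i, |p.1 i| ≤
        (1 / 2) * ∑ i, (q.1 i + q.2 - b i) ^ 2 + β * ∑ i, |q.1 i| := by
  have : Nonempty (Fin n) := ⟨⟨0, hn⟩⟩
  obtain ⟨s, μ, hμ, hkkt⟩ := exists_nonneg_thresholdKKT hb hβ.le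
  refine ⟨(s, μ), ⟨⟨hkkt.nonneg, hμ⟩, fun q hq _ => hkkt.objective_le hq⟩, ?_⟩
  rintro ⟨t, ν⟩ ⟨⟨ht, -⟩, hmin⟩
  exact Prod.ext_iff.mpr (hkkt.eq_of_objective_le hβ.ne' ht (hmin (s, μ) hkkt.nonneg hμ))
end

section
/- For an order-3 stochastic tensor P (nonnegative with Σᵢ P_{ijk} = 1 for all j,k), α ∈ (0, 1/2), and a stochastic vector v, the multilinear PageRank equation x = α R(x ⊗ x) + (1−α)v has a unique stochastic solution, where R is the n×n² flattening of P along the first index. Moreover the fixed-point iteration x^{(q+1)} = αR(x^{(q)} ⊗ x^{(q)}) + (1−α)v on stochastic vectors satisfies ‖x^{(q+2)} − x^{(q+1)}‖₁ ≤ 2α ‖x^{(q+1)} − x^{(q)}‖₁ and converges to that solution. -/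
/-!
The map `F x = α R(x ⊗ x) + (1 - α) v` sends the probability simplex into itself, because `R` is
column-stochastic. A column-stochastic matrix does not increase the `ℓ¹` norm, and for stochastic
`x, y` one has `‖x ⊗ x - y ⊗ y‖₁ ≤ ‖x ⊗ (x - y)‖₁ + ‖(x - y) ⊗ y‖₁ = 2 ‖x - y‖₁`. Hence `F` is a
`2α`-contraction of the simplex in the `ℓ¹` metric, and the Banach fixed point theorem gives the
unique solution together with the convergence of the iteration.
-/

open Set Filter Topology

variable {ι κ : Type*} [Fintype ι] [Fintype κ]

lemma sum_sum_mul_of_sum_eq_one {M : κ → ι → ℝ} (hM1 : ∀ p, ∑ i, M i p = 1) (w : ι → ℝ) :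
    ∑ i, ∑ p, M i p * w p = ∑ p, w p := by
  rw [Finset.sum_comm]
  simp [← Finset.sum_mul, hM1]

lemma sum_abs_sum_mul_le_of_stochastic {M : κ → ι → ℝ} (hM : ∀ i p, 0 ≤ M i p)
    (hM1 : ∀ p, ∑ i, M i p = 1) (w : ι → ℝ) :
    ∑ i, |∑ p, M i p * w p| ≤ ∑ p, |w p| :=
  calc ∑ i, |∑ p, M i p * w p| ≤ ∑ i, ∑ p, M i p * |w p| := by
        gcongr with i
        refine (Finset.abs_sum_le_sum_abs _ _).trans_eq ?_
        simp only [abs_mul, abs_of_nonneg (hM _ _)]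
    _ = ∑ p, |w p| := sum_sum_mul_of_sum_eq_one hM1 _

lemma sum_abs_mul_sub_mul_le {x y : ι → ℝ} (hx : x ∈ stdSimplex ℝ ι) (hy : y ∈ stdSimplex ℝ ι) :
    ∑ p : ι × ι, |x p.1 * x p.2 - y p.1 * y p.2| ≤ 2 * ∑ i, |x i - y i| :=
  calc ∑ p : ι × ι, |x p.1 * x p.2 - y p.1 * y p.2|
      ≤ ∑ p : ι × ι, (x p.1 * |x p.2 - y p.2| + |x p.1 - y p.1| * y p.2) := by
        gcongr with p
        calc |x p.1 * x p.2 - y p.1 * y p.2|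
            = |x p.1 * (x p.2 - y p.2) + (x p.1 - y p.1) * y p.2| := by ring_nf
          _ ≤ _ := (abs_add_le _ _).trans_eq <| by
            rw [abs_mul, abs_mul, abs_of_nonneg (hx.1 _), abs_of_nonneg (hy.1 _)]
    _ = (∑ j, x j) * ∑ k, |x k - y k| + (∑ j, |x j - y j|) * ∑ k, y k := by
        simp only [Fintype.sum_prod_type, Finset.sum_add_distrib, Finset.sum_mul_sum]
    _ = 2 * ∑ i, |x i - y i| := by rw [hx.2, hy.2]; ring

theorem exists_fixedPoint_tendsto_of_sum_abs_sub_le {s : Set (ι → ℝ)} (hs : IsClosed s)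
    (hne : s.Nonempty) {f : (ι → ℝ) → ι → ℝ} (hfs : MapsTo f s s) {K : ℝ} (hK : K < 1)
    (hf : ∀ x ∈ s, ∀ y ∈ s, ∑ i, |f x i - f y i| ≤ K * ∑ i, |x i - y i|) :
    ∃ z ∈ s, f z = z ∧ ∀ x ∈ s, Tendsto (fun q => f^[q] x) atTop (𝓝 z) := by
  -- `ι → ℝ` carries the sup metric, so the contraction argument runs on `s` inside `ℓ¹(ι)`.
  let t : Set (PiLp 1 fun _ : ι => ℝ) := WithLp.ofLp ⁻¹' s
  have : CompleteSpace t := (hs.preimage (PiLp.continuous_ofLp 1 _)).completeSpace_coe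
  have : Nonempty t := ⟨⟨WithLp.toLp 1 hne.some, hne.some_mem⟩⟩
  let g : t → t := fun x => ⟨WithLp.toLp 1 (f x.1), hfs x.2⟩
  have hg : ContractingWith K.toNNReal g := by
    refine ⟨Real.toNNReal_lt_one.2 hK, LipschitzWith.of_dist_le_mul fun x y => ?_⟩
    simp only [Subtype.dist_eq, PiLp.dist_eq_of_L1, Real.dist_eq]
    exact (hf _ x.2 _ y.2).trans (by gcongr; exact Real.le_coe_toNNReal K)
  let e : t → ι → ℝ := fun x => WithLp.ofLp x.1
  have he : Continuous e := (PiLp.continuous_ofLp 1 _).comp continuous_subtype_val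
  have hge : Function.Semiconj e g f := fun _ => rfl
  refine ⟨e (ContractingWith.fixedPoint g hg), (ContractingWith.fixedPoint g hg).2,
    congrArg e hg.fixedPoint_isFixedPt, fun x hx => ?_⟩
  have := (he.tendsto _).comp (hg.tendsto_iterate_fixedPoint ⟨WithLp.toLp 1 x, hx⟩)
  simpa only [Function.comp_def, (hge.iterate_right _).eq] using this

def multilinearPageRankMap (α : ℝ) (P : ι → ι → ι → ℝ) (v x : ι → ℝ) (i : ι) : ℝ :=
  α * ∑ p : ι × ι, P i p.1 p.2 * (x p.1 * x p.2) + (1 - α) * v i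

section multilinearPageRankMap

variable {α : ℝ} {P : ι → ι → ι → ℝ} {v : ι → ℝ}

lemma mapsTo_multilinearPageRankMap (hα0 : 0 ≤ α) (hα1 : α ≤ 1) (hP : ∀ i j k, 0 ≤ P i j k)
    (hP1 : ∀ j k, ∑ i, P i j k = 1) (hv : v ∈ stdSimplex ℝ ι) :
    MapsTo (multilinearPageRankMap α P v) (stdSimplex ℝ ι) (stdSimplex ℝ ι) := by
  intro x hx
  refine ⟨fun i => ?_, ?_⟩
  · exact add_nonneg (mul_nonneg hα0 <| Finset.sum_nonneg fun p _ =>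
      mul_nonneg (hP _ _ _) (mul_nonneg (hx.1 _) (hx.1 _))) (mul_nonneg (by linarith) (hv.1 i))
  · have hxx : ∑ p : ι × ι, x p.1 * x p.2 = 1 := by
      rw [Fintype.sum_prod_type, ← Finset.sum_mul_sum, hx.2, one_mul]
    simp only [multilinearPageRankMap, Finset.sum_add_distrib, ← Finset.mul_sum,
      sum_sum_mul_of_sum_eq_one (M := fun i (p : ι × ι) => P i p.1 p.2) (fun p => hP1 p.1 p.2),
      hxx, hv.2]
    ring

lemma sum_abs_multilinearPageRankMap_sub_le (hα0 : 0 ≤ α) (hP : ∀ i j k, 0 ≤ P i j k)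
    (hP1 : ∀ j k, ∑ i, P i j k = 1) {x y : ι → ℝ} (hx : x ∈ stdSimplex ℝ ι)
    (hy : y ∈ stdSimplex ℝ ι) :
    ∑ i, |multilinearPageRankMap α P v x i - multilinearPageRankMap α P v y i|
      ≤ 2 * α * ∑ i, |x i - y i| := by
  have hdiff : ∀ i, multilinearPageRankMap α P v x i - multilinearPageRankMap α P v y i
      = α * ∑ p : ι × ι, P i p.1 p.2 * (x p.1 * x p.2 - y p.1 * y p.2) := by
    intro i
    simp only [multilinearPageRankMap, mul_sub, Finset.sum_sub_distrib]
    ring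
  calc ∑ i, |multilinearPageRankMap α P v x i - multilinearPageRankMap α P v y i|
      = α * ∑ i, |∑ p : ι × ι, P i p.1 p.2 * (x p.1 * x p.2 - y p.1 * y p.2)| := by
        simp only [hdiff, abs_mul, abs_of_nonneg hα0]
        rw [Finset.mul_sum]
    _ ≤ α * ∑ p : ι × ι, |x p.1 * x p.2 - y p.1 * y p.2| := by
        gcongr
        exact sum_abs_sum_mul_le_of_stochastic (M := fun i (p : ι × ι) => P i p.1 p.2)
          (fun i p => hP i p.1 p.2) (fun p => hP1 p.1 p.2) _
    _ ≤ α * (2 * ∑ i, |x i - y i|) := by gcongr; exact sum_abs_mul_sub_mul_le hx hy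
    _ = 2 * α * ∑ i, |x i - y i| := by ring

end multilinearPageRankMap

/-- For an order-3 stochastic tensor `P`, `α ∈ (0, 1/2)` and stochastic `v`,
the multilinear PageRank equation `x = α R(x⊗x) + (1−α)v` has a unique stochastic solution,
consecutive differences of the fixed-point iteration contract with factor `2α`, and the
iteration converges to that solution. -/
theorem stmt12 {n : ℕ} (α : ℝ) (hα : α ∈ Set.Ioo (0 : ℝ) (1 / 2))
    (P : Fin n → Fin n → Fin n → ℝ)
    (hP : (∀ i j k, 0 ≤ P i j k) ∧ ∀ j k, ∑ i, P i j k = 1)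
    (v : Fin n → ℝ) (hv : ∀ i, 0 ≤ v i) (hv1 : ∑ i, v i = 1)
    (F : (Fin n → ℝ) → (Fin n → ℝ))
    (hF : ∀ x i, F x i =
      α * (∑ p : Fin n × Fin n, P i p.1 p.2 * (x p.1 * x p.2)) + (1 - α) * v i) :
    ∃ z : Fin n → ℝ, ((∀ i, 0 ≤ z i) ∧ ∑ i, z i = 1 ∧ F z = z) ∧
      (∀ y : Fin n → ℝ, (∀ i, 0 ≤ y i) → ∑ i, y i = 1 → F y = y → y = z) ∧
      ∀ x₀ : Fin n → ℝ, (∀ i, 0 ≤ x₀ i) → ∑ i, x₀ i = 1 →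
        (∀ q, ∑ i, |(F^[q + 2] x₀) i - (F^[q + 1] x₀) i| ≤
          2 * α * ∑ i, |(F^[q + 1] x₀) i - (F^[q] x₀) i|) ∧
        Filter.Tendsto (fun q => F^[q] x₀) Filter.atTop (nhds z) := by
  obtain ⟨hα0, hα1⟩ := hα
  obtain ⟨hPnn, hP1⟩ := hP
  obtain rfl : F = multilinearPageRankMap α P v := funext fun x => funext (hF x)
  have hmaps := mapsTo_multilinearPageRankMap hα0.le (by linarith) hPnn hP1 ⟨hv, hv1⟩
  have hcontr {x y} (hx : x ∈ stdSimplex ℝ (Fin n)) (hy : y ∈ stdSimplex ℝ (Fin n)) :=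
    sum_abs_multilinearPageRankMap_sub_le (v := v) hα0.le hPnn hP1 hx hy
  obtain ⟨z, hz, hFz, hlim⟩ := exists_fixedPoint_tendsto_of_sum_abs_sub_le
    (isClosed_stdSimplex ℝ _) ⟨v, hv, hv1⟩ hmaps (by linarith : 2 * α < 1)
    fun _ hx _ hy => hcontr hx hy
  refine ⟨z, ⟨hz.1, hz.2, hFz⟩, fun y hy hy1 hFy => ?_, fun x₀ hx₀ hx₀1 =>
    ⟨fun q => ?_, hlim x₀ ⟨hx₀, hx₀1⟩⟩⟩
  · exact tendsto_nhds_unique (by simp [Function.iterate_fixed hFy]) (hlim y ⟨hy, hy1⟩)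
  · have hq := hmaps.iterate q ⟨hx₀, hx₀1⟩
    simpa only [Function.iterate_succ_apply'] using hcontr (hmaps hq) hq
end
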